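/- arXiv:1305.0513 — 3 statements merged into one kernel-verified Lean document; each statement's English description precedes it below -/
import Mathlib

section
/- Let G be the path graph on three vertices a, b, c with edges e1 = {a,b} and e2 = {b,c}, and let k = 2. Let f(S) denote the number of k-reachable pairs of G cut by the edge set S. Then f({e1}) = 2, f({e2}) = 2, f({e1,e2}) = 3 and f(∅) = 0; in particular f({e1}) + f({e2}) > f({e1,e2}) + f({e1} ∩ {e2}), so f is not supermodular. -/
open SimpleGraph

/-- `R_G`: the set of `k`-reachable (unordered) pairs of `G`. -/
def reachablePairs {V : Type*} (G : SimpleGraph V) (k : ℕ) : Set (Sym2 V) :=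
  {p | ∃ u v : V, p = s(u, v) ∧ u ≠ v ∧ G.edist u v ≤ k}

/-- `f(S)`: the number of `k`-reachable pairs of `G` cut by the edge set `S`. -/
noncomputable def cutCount {V : Type*} (G : SimpleGraph V) (k : ℕ) (S : Set (Sym2 V)) : ℕ :=
  ((reachablePairs G k) \ (reachablePairs (G.deleteEdges S) k)).ncard

lemma isolated_not_reachable {V : Type*} {G : SimpleGraph V} {v u : V}
    (h : ∀ w, ¬ G.Adj v w) (hne : v ≠ u) : ¬ G.Reachable v u := by
  rintro ⟨p⟩
  cases p with
  | nil => exact hne rfl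
  | cons h' _ => exact h _ h'

lemma reachable_of_edist_le_two {V : Type*} {H : SimpleGraph V} {u v : V}
    (h : H.edist u v ≤ 2) : H.Reachable u v :=
  reachable_of_edist_ne_top (fun ht => by simp [ht] at h)

lemma mem_reachablePairs {V : Type*} {H : SimpleGraph V} {x y : V}
    (hne : x ≠ y) (h : H.edist x y ≤ 2) : s(x, y) ∈ reachablePairs H 2 :=
  ⟨x, y, rfl, hne, h⟩

lemma not_mem_reachablePairs {V : Type*} {H : SimpleGraph V} {x y : V}
    (h : ¬ H.Reachable x y) : s(x, y) ∉ reachablePairs H 2 := by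
  rintro ⟨u, v, hp, hne, hle⟩
  have hr := reachable_of_edist_le_two hle
  rw [Sym2.eq_iff] at hp
  rcases hp with ⟨rfl, rfl⟩ | ⟨rfl, rfl⟩
  · exact h hr
  · exact h hr.symm

/-- On the path graph `a - b - c` with `k = 2`, the cut-counting function `f`
satisfies `f({e1}) = 2`, `f({e2}) = 2`, `f({e1,e2}) = 3`, `f(∅) = 0`, and
`f({e1,e2}) + f({e1} ∩ {e2}) < f({e1}) + f({e2})`; hence `f` is not supermodular. -/
theorem cutCount_not_supermodular_path_graph :
    let G : SimpleGraph (Fin 3) := SimpleGraph.fromEdgeSet {s((0 : Fin 3), 1), s((1 : Fin 3), 2)}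
    let e1 : Sym2 (Fin 3) := s((0 : Fin 3), 1)
    let e2 : Sym2 (Fin 3) := s((1 : Fin 3), 2)
    cutCount G 2 {e1} = 2 ∧ cutCount G 2 {e2} = 2 ∧
      cutCount G 2 {e1, e2} = 3 ∧ cutCount G 2 (∅ : Set (Sym2 (Fin 3))) = 0 ∧
      cutCount G 2 {e1, e2} + cutCount G 2 ({e1} ∩ {e2}) <
        cutCount G 2 {e1} + cutCount G 2 {e2} := by
  intro G e1 e2
  -- adjacency in G
  have h01 : G.Adj 0 1 := by simp [G, SimpleGraph.fromEdgeSet_adj]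
  have h12 : G.Adj 1 2 := by simp [G, SimpleGraph.fromEdgeSet_adj]
  have e01 : G.edist 0 1 ≤ 2 := by
    refine le_trans (SimpleGraph.edist_le (SimpleGraph.Walk.cons h01 SimpleGraph.Walk.nil)) ?_
    simp
  have e12 : G.edist 1 2 ≤ 2 := by
    refine le_trans (SimpleGraph.edist_le (SimpleGraph.Walk.cons h12 SimpleGraph.Walk.nil)) ?_
    simp
  have e02 : G.edist 0 2 ≤ 2 := by
    refine le_trans (SimpleGraph.edist_le
      (SimpleGraph.Walk.cons h01 (SimpleGraph.Walk.cons h12 SimpleGraph.Walk.nil))) ?_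
    simp
  -- the reachable pairs of G
  have hRG : reachablePairs G 2 = {s((0:Fin 3),1), s((1:Fin 3),2), s((0:Fin 3),2)} := by
    ext p
    constructor
    · rintro ⟨u, v, rfl, hne, -⟩
      fin_cases u <;> fin_cases v <;>
        first
          | exact absurd rfl hne
          | (simp only [Set.mem_insert_iff, Set.mem_singleton_iff]; decide)
    · rintro (rfl | rfl | rfl)
      · exact mem_reachablePairs (by decide) e01
      · exact mem_reachablePairs (by decide) e12
      · exact mem_reachablePairs (by decide) e02
  -- vertex 0 is isolated after deleting e1
  have hiso0 : ∀ w, ¬ (G.deleteEdges {e1}).Adj 0 w := by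
    intro w
    rw [SimpleGraph.deleteEdges_adj]
    rintro ⟨hadj, hmem⟩
    rw [SimpleGraph.fromEdgeSet_adj] at hadj
    obtain ⟨hh, hne⟩ := hadj
    fin_cases w <;> simp_all [e1] <;> revert hh <;> decide
  -- vertex 2 is isolated after deleting e2
  have hiso2 : ∀ w, ¬ (G.deleteEdges {e2}).Adj 2 w := by
    intro w
    rw [SimpleGraph.deleteEdges_adj]
    rintro ⟨hadj, hmem⟩
    rw [SimpleGraph.fromEdgeSet_adj] at hadj
    obtain ⟨hh, hne⟩ := hadj
    fin_cases w <;> simp_all [e2] <;> revert hh <;> decide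
  -- vertices 0 and 2 are isolated after deleting both
  have hiso0' : ∀ w, ¬ (G.deleteEdges {e1, e2}).Adj 0 w := by
    intro w
    rw [SimpleGraph.deleteEdges_adj]
    rintro ⟨hadj, hmem⟩
    rw [SimpleGraph.fromEdgeSet_adj] at hadj
    obtain ⟨hh, hne⟩ := hadj
    fin_cases w <;> simp_all [e1, e2] <;> revert hh <;> decide
  have hiso2' : ∀ w, ¬ (G.deleteEdges {e1, e2}).Adj 2 w := by
    intro w
    rw [SimpleGraph.deleteEdges_adj]
    rintro ⟨hadj, hmem⟩
    rw [SimpleGraph.fromEdgeSet_adj] at hadj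
    obtain ⟨hh, hne⟩ := hadj
    fin_cases w <;> simp_all [e1, e2] <;> revert hh <;> decide
  -- reachable pairs after deleting e1
  have hadj12' : (G.deleteEdges {e1}).Adj 1 2 := by
    rw [SimpleGraph.deleteEdges_adj]
    refine ⟨h12, ?_⟩
    simp [e1]
  have hR1 : reachablePairs (G.deleteEdges {e1}) 2 = {s((1:Fin 3),2)} := by
    ext p
    constructor
    · rintro ⟨u, v, rfl, hne, hle⟩
      have hr := reachable_of_edist_le_two hle
      fin_cases u <;> fin_cases v
      · exact absurd rfl hne
      · exact absurd hr (isolated_not_reachable hiso0 (by decide))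
      · exact absurd hr (isolated_not_reachable hiso0 (by decide))
      · exact absurd hr.symm (isolated_not_reachable hiso0 (by decide))
      · exact absurd rfl hne
      · simp
      · exact absurd hr.symm (isolated_not_reachable hiso0 (by decide))
      · simp [Sym2.eq_swap]
      · exact absurd rfl hne
    · rintro rfl
      refine mem_reachablePairs (by decide) ?_
      refine le_trans (SimpleGraph.edist_le (SimpleGraph.Walk.cons hadj12' SimpleGraph.Walk.nil)) ?_
      simp
  -- reachable pairs after deleting e2
  have hadj01' : (G.deleteEdges {e2}).Adj 0 1 := by
    rw [SimpleGraph.deleteEdges_adj]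
    refine ⟨h01, ?_⟩
    simp [e2]
  have hR2 : reachablePairs (G.deleteEdges {e2}) 2 = {s((0:Fin 3),1)} := by
    ext p
    constructor
    · rintro ⟨u, v, rfl, hne, hle⟩
      have hr := reachable_of_edist_le_two hle
      fin_cases u <;> fin_cases v
      · exact absurd rfl hne
      · simp
      · exact absurd hr.symm (isolated_not_reachable hiso2 (by decide))
      · simp [Sym2.eq_swap]
      · exact absurd rfl hne
      · exact absurd hr.symm (isolated_not_reachable hiso2 (by decide))
      · exact absurd hr (isolated_not_reachable hiso2 (by decide))
      · exact absurd hr (isolated_not_reachable hiso2 (by decide))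
      · exact absurd rfl hne
    · rintro rfl
      refine mem_reachablePairs (by decide) ?_
      refine le_trans (SimpleGraph.edist_le (SimpleGraph.Walk.cons hadj01' SimpleGraph.Walk.nil)) ?_
      simp
  -- reachable pairs after deleting both
  have hR12 : reachablePairs (G.deleteEdges {e1, e2}) 2 = ∅ := by
    ext p
    simp only [Set.mem_empty_iff_false, iff_false]
    rintro ⟨u, v, rfl, hne, hle⟩
    have hr := reachable_of_edist_le_two hle
    fin_cases u <;> fin_cases v
    · exact absurd rfl hne
    · exact absurd hr (isolated_not_reachable hiso0' (by decide))
    · exact absurd hr (isolated_not_reachable hiso0' (by decide))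
    · exact absurd hr.symm (isolated_not_reachable hiso0' (by decide))
    · exact absurd rfl hne
    · exact absurd hr.symm (isolated_not_reachable hiso2' (by decide))
    · exact absurd hr (isolated_not_reachable hiso2' (by decide))
    · exact absurd hr (isolated_not_reachable hiso2' (by decide))
    · exact absurd rfl hne
  -- the four values
  have hd1 : cutCount G 2 {e1} = 2 := by
    have hd : reachablePairs G 2 \ reachablePairs (G.deleteEdges {e1}) 2
        = {s((0:Fin 3),1), s((0:Fin 3),2)} := by
      rw [hRG, hR1]
      ext p
      simp only [Set.mem_diff, Set.mem_insert_iff, Set.mem_singleton_iff]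
      constructor
      · rintro ⟨h1 | h1 | h1, h2⟩ <;> simp_all
      · rintro (rfl | rfl) <;> refine ⟨by simp, by decide⟩
    rw [cutCount, hd]
    exact Set.ncard_pair (by decide)
  have hd2 : cutCount G 2 {e2} = 2 := by
    have hd : reachablePairs G 2 \ reachablePairs (G.deleteEdges {e2}) 2
        = {s((1:Fin 3),2), s((0:Fin 3),2)} := by
      rw [hRG, hR2]
      ext p
      simp only [Set.mem_diff, Set.mem_insert_iff, Set.mem_singleton_iff]
      constructor
      · rintro ⟨h1 | h1 | h1, h2⟩ <;> simp_all
      · rintro (rfl | rfl) <;> refine ⟨by simp, by decide⟩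
    rw [cutCount, hd]
    exact Set.ncard_pair (by decide)
  have hd12 : cutCount G 2 {e1, e2} = 3 := by
    have hd : reachablePairs G 2 \ reachablePairs (G.deleteEdges {e1, e2}) 2
        = {s((0:Fin 3),1), s((1:Fin 3),2), s((0:Fin 3),2)} := by
      rw [hRG, hR12, Set.diff_empty]
    rw [cutCount, hd]
    exact Set.ncard_eq_three.mpr
      ⟨s((0:Fin 3),1), s((1:Fin 3),2), s((0:Fin 3),2), by decide, by decide, by decide, rfl⟩
  have hd0 : cutCount G 2 (∅ : Set (Sym2 (Fin 3))) = 0 := by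
    rw [cutCount, SimpleGraph.deleteEdges_empty, Set.diff_self]
    exact Set.ncard_empty _
  have hint : ({e1} : Set (Sym2 (Fin 3))) ∩ {e2} = ∅ := by
    ext p
    simp only [Set.mem_inter_iff, Set.mem_singleton_iff, Set.mem_empty_iff_false, iff_false]
    rintro ⟨rfl, h⟩
    exact absurd h (by decide)
  refine ⟨hd1, hd2, hd12, hd0, ?_⟩
  rw [hd1, hd2, hd12, hint, hd0]
  norm_num
end

section
/- There exist a finite simple undirected graph G=(V,E), an integer k ≥ 1, and edges e1, e3 ∈ E such that f({e1}) + f({e3}) < f({e1,e3}) + f(∅), where f(S) denotes the number of k-reachable pairs of G cut by S. Hence the cut-counting set function f is in general not submodular. -/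
open SimpleGraph

private lemma edist_le_one' {V : Type*} {G : SimpleGraph V} {a b : V} (h : G.Adj a b) :
    G.edist a b ≤ 3 := by
  have := h.toWalk.edist_le
  simp at this
  exact this.trans (by norm_num)

private lemma edist_le_two' {V : Type*} {G : SimpleGraph V} {a b c : V}
    (h1 : G.Adj a b) (h2 : G.Adj b c) : G.edist a c ≤ 3 := by
  have := (h1.toWalk.append h2.toWalk).edist_le
  simp at this
  exact this.trans (by norm_num)

private lemma edist_le_three' {V : Type*} {G : SimpleGraph V} {a b c d : V}
    (h1 : G.Adj a b) (h2 : G.Adj b c) (h3 : G.Adj c d) : G.edist a d ≤ 3 := by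
  have := (h1.toWalk.append (h2.toWalk.append h3.toWalk)).edist_le
  simp at this
  exact this

private lemma not_reachable_of_isolated {V : Type*} {G : SimpleGraph V} {u v : V}
    (h : ∀ w, ¬ G.Adj u w) (hne : u ≠ v) : ¬ G.Reachable u v := by
  rintro ⟨p⟩
  cases p with
  | nil => exact hne rfl
  | cons h' _ => exact h _ h'

private def G4 : SimpleGraph (Fin 4) := SimpleGraph.fromRel (fun x y => y = x + 1)

private lemma G4_adj (a b : Fin 4) : G4.Adj a b ↔ a ≠ b ∧ (b = a + 1 ∨ a = b + 1) := by
  simp [G4]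


/-- There is a finite graph `G`, an integer `k ≥ 1` and edges `e1, e3` with
`f({e1}) + f({e3}) < f({e1,e3}) + f(∅)`; hence the cut-counting set function
is in general not submodular. -/
theorem cutCount_not_submodular :
    ∃ (V : Type) (_ : Fintype V) (G : SimpleGraph V) (k : ℕ),
      1 ≤ k ∧ ∃ e1 e3 : Sym2 V, e1 ∈ G.edgeSet ∧ e3 ∈ G.edgeSet ∧
        cutCount G k {e1} + cutCount G k {e3} <
          cutCount G k {e1, e3} + cutCount G k (∅ : Set (Sym2 V)) := by
  refine ⟨Fin 4, inferInstance, G4, 3, by norm_num, s(0,1), s(3,0), ?_, ?_, ?_⟩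
  · rw [mem_edgeSet, G4_adj]; decide
  · rw [mem_edgeSet, G4_adj]; decide
  · -- adjacency facts in the two single-deletion graphs
    have hd1 : ∀ a b : Fin 4, (G4.deleteEdges {s(0,1)}).Adj a b ↔
        (G4.Adj a b ∧ s(a,b) ≠ s(0,1)) := by
      intro a b; rw [deleteEdges_adj]; simp
    have hd3 : ∀ a b : Fin 4, (G4.deleteEdges {s(3,0)}).Adj a b ↔
        (G4.Adj a b ∧ s(a,b) ≠ s(3,0)) := by
      intro a b; rw [deleteEdges_adj]; simp
    have hc1 : cutCount G4 3 {s(0,1)} = 0 := by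
      rw [cutCount, Set.ncard_eq_zero (Set.toFinite _), Set.diff_eq_empty]
      rintro p ⟨u, v, rfl, hne, -⟩
      refine ⟨u, v, rfl, hne, ?_⟩
      -- deleted graph is the path 1-2-3-0
      have a12 : (G4.deleteEdges {s(0,1)}).Adj 1 2 := by rw [hd1, G4_adj]; decide
      have a23 : (G4.deleteEdges {s(0,1)}).Adj 2 3 := by rw [hd1, G4_adj]; decide
      have a30 : (G4.deleteEdges {s(0,1)}).Adj 3 0 := by rw [hd1, G4_adj]; decide
      fin_cases u <;> fin_cases v <;> first
        | exact absurd rfl hne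
        | exact edist_le_one' a12
        | exact edist_le_one' a23
        | exact edist_le_one' a30
        | exact edist_le_one' a12.symm
        | exact edist_le_one' a23.symm
        | exact edist_le_one' a30.symm
        | exact edist_le_two' a12 a23
        | exact edist_le_two' a23 a30
        | exact edist_le_two' a23.symm a12.symm
        | exact edist_le_two' a30.symm a23.symm
        | exact edist_le_three' a12 a23 a30
        | exact edist_le_three' a30.symm a23.symm a12.symm
    have hc3 : cutCount G4 3 {s(3,0)} = 0 := by
      rw [cutCount, Set.ncard_eq_zero (Set.toFinite _), Set.diff_eq_empty]
      rintro p ⟨u, v, rfl, hne, -⟩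
      refine ⟨u, v, rfl, hne, ?_⟩
      -- deleted graph is the path 0-1-2-3
      have a01 : (G4.deleteEdges {s(3,0)}).Adj 0 1 := by rw [hd3, G4_adj]; decide
      have a12 : (G4.deleteEdges {s(3,0)}).Adj 1 2 := by rw [hd3, G4_adj]; decide
      have a23 : (G4.deleteEdges {s(3,0)}).Adj 2 3 := by rw [hd3, G4_adj]; decide
      fin_cases u <;> fin_cases v <;> first
        | exact absurd rfl hne
        | exact edist_le_one' a01
        | exact edist_le_one' a12
        | exact edist_le_one' a23
        | exact edist_le_one' a01.symm
        | exact edist_le_one' a12.symm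
        | exact edist_le_one' a23.symm
        | exact edist_le_two' a01 a12
        | exact edist_le_two' a12 a23
        | exact edist_le_two' a12.symm a01.symm
        | exact edist_le_two' a23.symm a12.symm
        | exact edist_le_three' a01 a12 a23
        | exact edist_le_three' a23.symm a12.symm a01.symm
    rw [hc1, hc3]
    have hpos : 0 < cutCount G4 3 {s(0,1), s(3,0)} := by
      rw [cutCount]
      refine (Set.ncard_pos (Set.toFinite _)).mpr ⟨s(0,2), ⟨0, 2, rfl, by decide, ?_⟩, ?_⟩
      · -- edist in G4 between 0 and 2 is ≤ 3 (via 1)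
        have a01 : G4.Adj 0 1 := by rw [G4_adj]; decide
        have a12 : G4.Adj 1 2 := by rw [G4_adj]; decide
        exact edist_le_two' a01 a12
      · rintro ⟨u, v, huv, hne, hle⟩
        -- 0 is isolated in the doubly-deleted graph
        have hiso : ∀ w, ¬ (G4.deleteEdges {s(0,1), s(3,0)}).Adj 0 w := by
          intro w hw
          rw [deleteEdges_adj, G4_adj] at hw
          simp only [Set.mem_insert_iff, Set.mem_singleton_iff] at hw
          revert hw; fin_cases w <;> decide
        have key : ∀ x : Fin 4, x ≠ 0 → ¬ (G4.deleteEdges {s(0,1), s(3,0)}).edist 0 x ≤ 3 := by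
          intro x hx h
          have := not_reachable_of_isolated hiso (Ne.symm hx)
          rw [edist_eq_top_of_not_reachable this] at h
          simp at h
        rw [Sym2.eq_iff] at huv
        rcases huv with ⟨h0, h2⟩ | ⟨h0, h2⟩
        · subst h0; subst h2; exact key 2 (by decide) hle
        · subst h0; subst h2
          rw [edist_comm] at hle
          exact key 2 (by decide) hle
    simpa using Nat.lt_of_lt_of_le hpos (Nat.le_add_right _ _)
end

section
/- Let G=(V,E) be a finite simple undirected graph, k ≥ 1 an integer, E_r ⊆ E, and {u,v} ∈ R_G. Let E_P(u,v) ⊆ E be the set of edges lying on some simple u–v path in G of length at most k. Then E_r cuts {u,v} if and only if E_r ∩ E_P(u,v) cuts {u,v}. Hence whether a pair is cut depends only on the removed edges that lie on short paths between the pair, and edges lying on no short path of any relevant pair can be pruned without affecting the result. -/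
open SimpleGraph

/-- Whether `Er` cuts the pair `{u,v}` depends only on the removed edges lying
on some simple `u`–`v` path of length at most `k`: `Er` cuts `{u,v}` iff
`Er ∩ E_P(u,v)` cuts `{u,v}`. -/
theorem cut_iff_cut_by_inter_shortPath_edges
    {V : Type*} [Fintype V] (G : SimpleGraph V) (k : ℕ) (hk : 1 ≤ k)
    (Er : Set (Sym2 V)) (hEr : Er ⊆ G.edgeSet)
    (u v : V) (hmem : s(u, v) ∈ reachablePairs G k) :
    ((k : ℕ∞) < (G.deleteEdges Er).edist u v ↔
      (k : ℕ∞) <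
        (G.deleteEdges
          (Er ∩ {e : Sym2 V | ∃ p : G.Walk u v, p.IsPath ∧ p.length ≤ k ∧ e ∈ p.edges})).edist
          u v) := by
  set S : Set (Sym2 V) := {e : Sym2 V | ∃ p : G.Walk u v, p.IsPath ∧ p.length ≤ k ∧ e ∈ p.edges}
  have hle : G.deleteEdges Er ≤ G.deleteEdges (Er ∩ S) := by
    intro a b hab
    simp only [deleteEdges_adj] at hab ⊢
    exact ⟨hab.1, fun h => hab.2 h.1⟩
  constructor
  · intro h
    by_contra hcon
    push_neg at hcon
    -- extract a walk of length ≤ k in G.deleteEdges (Er ∩ S)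
    have hne : (G.deleteEdges (Er ∩ S)).edist u v ≠ ⊤ :=
      fun ht => by simp [ht] at hcon
    obtain ⟨p, hp⟩ := SimpleGraph.exists_walk_of_edist_ne_top hne
    have hplen : (p.length : ℕ∞) ≤ k := by rw [hp]; exact hcon
    have hplen' : p.length ≤ k := by exact_mod_cast hplen
    classical
    set q := p.bypass with hq
    have hqpath : q.IsPath := p.bypass_isPath
    have hqlen : q.length ≤ k := le_trans p.length_bypass_le hplen'
    -- transfer q to G
    have hsub : ∀ e ∈ q.edges, e ∈ G.edgeSet := fun e he =>
      (SimpleGraph.edgeSet_subset_edgeSet.mpr (SimpleGraph.deleteEdges_le _)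
        (q.edges_subset_edgeSet he))
    have hqG := q.transfer G hsub
    -- edges of q avoid Er ∩ S
    have hnotES : ∀ e ∈ q.edges, e ∉ Er ∩ S := by
      intro e he hES
      have := q.edges_subset_edgeSet he
      rw [SimpleGraph.edgeSet_deleteEdges] at this
      exact this.2 hES
    -- edges of q are all in S, via the transferred path
    have hinS : ∀ e ∈ q.edges, e ∈ S := by
      intro e he
      refine ⟨q.transfer G hsub, ?_, ?_, ?_⟩
      · rw [SimpleGraph.Walk.isPath_def, SimpleGraph.Walk.support_transfer]
        exact hqpath.support_nodup
      · rw [SimpleGraph.Walk.length_transfer]; exact hqlen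
      · rw [SimpleGraph.Walk.edges_transfer]; exact he
    -- so edges of q avoid Er
    have hnotEr : ∀ e ∈ q.edges, e ∈ (G.deleteEdges Er).edgeSet := by
      intro e he
      rw [SimpleGraph.edgeSet_deleteEdges]
      refine ⟨hsub e he, fun hEr' => hnotES e he ⟨hEr', hinS e he⟩⟩
    have hfin : (G.deleteEdges Er).edist u v ≤ (q.transfer _ hnotEr).length :=
      SimpleGraph.edist_le _
    rw [SimpleGraph.Walk.length_transfer] at hfin
    exact absurd (le_trans hfin (by exact_mod_cast hqlen)) (not_le.mpr h)
  · intro h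
    exact lt_of_lt_of_le h (SimpleGraph.edist_anti hle)
end
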